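/- arXiv:2510.07495 — 8 statements merged into one kernel-verified Lean document; each statement's English description precedes it below -/
import Mathlib

section
/- For every natural number n ≥ 3, letting T = C(n,2) (the number of 2-element subsets of {1,…,n}), there exists a sequence S_1, S_2, …, S_T of 2-element subsets of {1,…,n} such that (i) every 2-element subset of {1,…,n} appears exactly once in the sequence, (ii) |S_ت ∩ S_{t+1}| = 1 for all 1 ≤ t ≤ T−1 (so the sequence is a Hamiltonian path in the Johnson graph J(n,2)), and (iii) |S_t ∩ S_{t+2}| = 1 for all 1 ≤ t ≤ T−2. -/
/-! The sequence is built by adding one vertex at a time. Suppose `L` is a valid sequence of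
the pairs of `s` whose first entry is `{w, q}` and whose first two entries both contain `w`.
For a new vertex `v`, list `s` as `x₁, …, x_k, q, w` and prepend the star
`{v, x₁}, …, {v, x_k}, {v, q}, {v, w}` to `L`. Entries of the star meet in `v`; at the
junction `{v, q}` meets `{w, q}` in `q`, and `{v, w}` meets the first two entries of `L` in
`w`. The new sequence starts with two entries containing `v`, so the construction repeats. -/

open Finset

section
variable {α : Type*} [DecidableEq α]

theorem card_pair_inter_eq_one {a b : α} {s : Finset α} (ha : a ∈ s) (hb : b ∉ s) :
    #({a, b} ∩ s) = 1 := by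
  rw [card_eq_one]
  exact ⟨a, by ext x; simp only [mem_inter, mem_insert, mem_singleton]; grind⟩

theorem Finset.exists_nodup_append_pair {s : Finset α} {q w : α} (hq : q ∈ s) (hw : w ∈ s)
    (hqw : q ≠ w) :
    ∃ xs : List α, (xs ++ [q, w]).Nodup ∧ ∀ x, x ∈ xs ++ [q, w] ↔ x ∈ s := by
  refine ⟨((s.erase q).erase w).toList, ?_, fun x => ?_⟩
  · rw [List.nodup_append]
    refine ⟨nodup_toList _, by simpa using hqw, ?_⟩
    simp only [mem_toList, mem_erase, List.mem_cons, List.not_mem_nil, or_false]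
    grind
  · simp only [List.mem_append, mem_toList, mem_erase, List.mem_cons, List.not_mem_nil,
      or_false]
    grind

def OverlapsNextTwo : List (Finset α) → Prop
  | [] => True
  | a :: l => (∀ s ∈ l.take 2, #(a ∩ s) = 1) ∧ OverlapsNextTwo l

theorem overlapsNextTwo_cons {a : Finset α} {l : List (Finset α)} :
    OverlapsNextTwo (a :: l) ↔ (∀ s ∈ l.take 2, #(a ∩ s) = 1) ∧ OverlapsNextTwo l :=
  Iff.rfl

theorem OverlapsNextTwo.card_inter_getElem_add {L : List (Finset α)} (hL : OverlapsNextTwo L)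
    {i k : ℕ} (hk₀ : 0 < k) (hk₂ : k ≤ 2) (h : i + k < L.length) :
    #(L[i] ∩ L[i + k]) = 1 := by
  induction L generalizing i with
  | nil => simp at h
  | cons a l ih =>
    cases i with
    | zero =>
      obtain ⟨j, rfl⟩ : ∃ j, k = j + 1 := ⟨k - 1, by omega⟩
      simp only [zero_add, List.getElem_cons_zero, List.getElem_cons_succ]
      exact hL.1 _ (List.mem_take_iff_getElem.2 ⟨j, by simp at h ⊢; omega, rfl⟩)
    | succ i =>
      simp only [List.getElem_cons_succ, Nat.add_right_comm i 1 k]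
      exact ih hL.2 (by simp at h; omega)

theorem OverlapsNextTwo.star_append {v q w : α} {xs : List α} {L : List (Finset α)}
    (hxs : (xs ++ [q, w]).Nodup) (hv : v ∉ xs ++ [q, w]) (hL : OverlapsNextTwo ({w, q} :: L))
    (hw : ∀ s ∈ ({w, q} :: L).take 2, w ∈ s ∧ v ∉ s) :
    OverlapsNextTwo ((xs ++ [q, w]).map (fun x => {v, x}) ++ {w, q} :: L) := by
  induction xs with
  | nil =>
    have hv' : v ∉ ({w, q} : Finset α) := by simp_all [or_comm]
    have hq : q ∉ ({v, w} : Finset α) := by simp_all [eq_comm]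
    simp only [List.nil_append, List.map_cons, List.map_nil, List.cons_append,
      overlapsNextTwo_cons] at hL ⊢
    refine ⟨?_, ?_, hL⟩
    · simp only [List.take_succ_cons, List.take_zero, List.mem_cons, List.not_mem_nil, or_false]
      rintro s (rfl | rfl)
      · exact card_pair_inter_eq_one (by simp) hq
      · rw [pair_comm]; exact card_pair_inter_eq_one (by simp) hv'
    · intro s hs
      rw [pair_comm]
      exact card_pair_inter_eq_one (hw s hs).1 (hw s hs).2
  | cons x xs ih =>
    rw [List.cons_append, List.nodup_cons] at hxs
    rw [List.cons_append, List.map_cons, List.cons_append, overlapsNextTwo_cons]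
    refine ⟨fun s hs => ?_, ih hxs.2 (fun h => hv (List.mem_cons_of_mem _ h))⟩
    rw [List.take_append_of_le_length (by simp), ← List.map_take] at hs
    obtain ⟨y, hy, rfl⟩ := List.mem_map.1 hs
    have hxy : x ≠ y := fun h => hxs.1 (h ▸ List.mem_of_mem_take hy)
    have hxv : x ≠ v := fun h => hv (h ▸ List.mem_cons_self ..)
    exact card_pair_inter_eq_one (by simp) (by simp [hxy, hxv])

def ListsPairsOf (s : Finset α) (L : List (Finset α)) : Prop :=
  L.Nodup ∧ ∀ A, A ∈ L ↔ A ⊆ s ∧ #A = 2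

theorem ListsPairsOf.length_eq {s : Finset α} {L : List (Finset α)} (hL : ListsPairsOf s L) :
    L.length = (#s).choose 2 := by
  rw [← List.toFinset_card_of_nodup hL.1, ← card_powersetCard]
  congr 1
  ext A
  rw [List.mem_toFinset, hL.2, mem_powersetCard]

theorem ListsPairsOf.star_append {s : Finset α} {v : α} {ys : List α} {L : List (Finset α)}
    (hv : v ∉ s) (hys : ys.Nodup) (hys_mem : ∀ x, x ∈ ys ↔ x ∈ s)
    (hL : ListsPairsOf s L) :
    ListsPairsOf (insert v s) (ys.map (fun x => {v, x}) ++ L) := by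
  obtain ⟨hnd, hmem⟩ := hL
  have hvys : ∀ x ∈ ys, x ≠ v := fun x hx h => hv (h ▸ (hys_mem x).1 hx)
  refine ⟨List.nodup_append.2 ⟨hys.map_on ?_, hnd, ?_⟩, fun A => ?_⟩
  · intro x hx y hy hxy
    have : x ∈ ({v, y} : Finset α) := hxy ▸ by simp
    simpa [hvys x hx] using this
  · rintro _ hA B hB rfl
    obtain ⟨x, -, rfl⟩ := List.mem_map.1 hA
    exact hv (((hmem _).1 hB).1 (by simp))
  · simp only [List.mem_append, List.mem_map, hmem]
    constructor
    · rintro (⟨x, hx, rfl⟩ | ⟨hAs, hA⟩)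
      · exact ⟨insert_subset_insert _ (by simpa using (hys_mem x).1 hx),
          card_pair_eq_two_iff.2 (hvys x hx).symm⟩
      · exact ⟨hAs.trans (subset_insert _ _), hA⟩
    · rintro ⟨hAs, hA⟩
      by_cases hvA : v ∈ A
      · obtain ⟨x, hx⟩ : ∃ x, A.erase v = {x} :=
          card_eq_one.1 (by rw [card_erase_of_mem hvA, hA])
        have hxA : x ∈ A.erase v := hx ▸ mem_singleton_self x
        refine Or.inl ⟨x, (hys_mem x).2 ?_, by rw [← insert_erase hvA, hx]⟩
        exact (mem_insert.1 (hAs (mem_of_mem_erase hxA))).resolve_left (ne_of_mem_erase hxA)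
      · exact Or.inr ⟨(subset_insert_iff_of_notMem hvA).1 hAs, hA⟩

theorem exists_overlapsNextTwo_insert {s : Finset α} {v w q : α} {L : List (Finset α)}
    (hv : v ∉ s) (hL : ListsPairsOf s ({w, q} :: L)) (hov : OverlapsNextTwo ({w, q} :: L))
    (hw : ∀ t ∈ ({w, q} :: L).take 2, w ∈ t) :
    ∃ a L', ListsPairsOf (insert v s) ({v, a} :: L') ∧ OverlapsNextTwo ({v, a} :: L') ∧
      ∀ t ∈ ({v, a} :: L').take 2, v ∈ t := by
  have hwq : {w, q} ⊆ s ∧ #{w, q} = 2 := (hL.2 _).1 List.mem_cons_self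
  have hvL : ∀ t ∈ ({w, q} :: L), v ∉ t := fun t ht hvt => hv (((hL.2 t).1 ht).1 hvt)
  obtain ⟨xs, hxs, hxs_mem⟩ := exists_nodup_append_pair (hwq.1 (by simp)) (hwq.1 (by simp))
    (card_pair_eq_two_iff.1 hwq.2).symm
  obtain ⟨a, ys, hys⟩ := List.exists_cons_of_ne_nil (by simp : xs ++ [q, w] ≠ [])
  refine ⟨a, ys.map (fun x => {v, x}) ++ {w, q} :: L, ?_, ?_, ?_⟩
  · simpa [hys] using hL.star_append hv hxs hxs_mem
  · have := hov.star_append hxs (fun h => hv ((hxs_mem v).1 h))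
      fun t ht => ⟨hw t ht, hvL t (List.mem_of_mem_take ht)⟩
    simpa [hys] using this
  · have : 1 ≤ ys.length := by
      have := congrArg List.length hys
      simp only [List.length_append, List.length_cons] at this
      omega
    rw [List.take_succ_cons, List.take_append_of_le_length (by simpa using this)]
    simp only [List.mem_cons, ← List.map_take, List.mem_map]
    rintro t (rfl | ⟨x, -, rfl⟩) <;> simp

theorem exists_overlapsNextTwo_of_two_le_card {s : Finset α} (hs : 2 ≤ #s) :
    ∃ w q L, ListsPairsOf s ({w, q} :: L) ∧ OverlapsNextTwo ({w, q} :: L) ∧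
      ∀ t ∈ ({w, q} :: L).take 2, w ∈ t := by
  induction s using Finset.induction_on with
  | empty => simp at hs
  | insert v s hv ih =>
    rw [card_insert_of_notMem hv] at hs
    obtain hs | hs := Nat.lt_or_ge #s 2
    · obtain ⟨x, rfl⟩ := card_eq_one.1 (by omega : #s = 1)
      refine ⟨v, x, [], ⟨List.nodup_singleton _, fun A => ?_⟩, by simp [OverlapsNextTwo],
        by simp⟩
      simp only [List.mem_singleton]
      constructor
      · rintro rfl; exact ⟨subset_rfl, card_pair_eq_two_iff.2 (by simpa using hv)⟩
      · rintro ⟨hA, hA2⟩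
        exact eq_of_subset_of_card_le hA (by rw [hA2]; exact card_le_two)
    · obtain ⟨w, q, L, hL, hov, hw⟩ := ih hs
      exact ⟨v, exists_overlapsNextTwo_insert hv hL hov hw⟩

theorem exists_listsPairsOf_overlapsNextTwo (s : Finset α) :
    ∃ L, ListsPairsOf s L ∧ OverlapsNextTwo L := by
  obtain hs | hs := Nat.lt_or_ge #s 2
  · refine ⟨[], ⟨List.nodup_nil, fun A => ?_⟩, trivial⟩
    simp only [List.not_mem_nil, false_iff, not_and]
    intro hA hA2
    have := card_le_card hA
    omega
  · obtain ⟨w, q, L, hL, hov, -⟩ := exists_overlapsNextTwo_of_two_le_card hs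
    exact ⟨_, hL, hov⟩

end

/-- For every `n ≥ 3` there is a Hamiltonian path `S_1, …, S_T` (`T = C(n,2)`)
through all 2-element subsets of `{1,…,n}` in the Johnson graph `J(n,2)`
(consecutive sets intersect in exactly one element) which moreover satisfies
`|S_t ∩ S_{t+2}| = 1` for all `t`. -/
theorem johnson_path_with_two_step_overlap (n : ℕ) :
    ∃ S : Fin (n.choose 2) → Finset (Fin n),
      (∀ t, (S t).card = 2) ∧
      (∀ A : Finset (Fin n), A.card = 2 → ∃! t, S t = A) ∧
      (∀ (t : ℕ) (ht : t + 1 < n.choose 2),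
        (S ⟨t, by omega⟩ ∩ S ⟨t + 1, ht⟩).card = 1) ∧
      (∀ (t : ℕ) (ht : t + 2 < n.choose 2),
        (S ⟨t, by omega⟩ ∩ S ⟨t + 2, ht⟩).card = 1) := by
  obtain ⟨L, hL, hov⟩ := exists_listsPairsOf_overlapsNextTwo (univ : Finset (Fin n))
  have hlen : L.length = n.choose 2 := by simpa using hL.length_eq
  refine ⟨fun t => L[t.1], fun t => ((hL.2 _).1 (List.getElem_mem _)).2, fun A hA => ?_,
    fun t ht => hov.card_inter_getElem_add (i := t) one_pos one_le_two (by omega),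
    fun t ht => hov.card_inter_getElem_add (i := t) two_pos le_rfl (by omega)⟩
  obtain ⟨i, hi, rfl⟩ := List.mem_iff_getElem.1 ((hL.2 A).2 ⟨subset_univ A, hA⟩)
  exact ⟨⟨i, hlen ▸ hi⟩, rfl, fun t ht => Fin.ext (hL.1.getElem_inj_iff.1 ht)⟩
end

section
/- (Projection lemma) Let H1 and H2 be Hermitian operators on a nonzero finite-dimensional complex inner product space, with H2 positive semidefinite. Let 𝒮 = ker(H2) be nonzero, let J be the smallest nonzero eigenvalue of H2 (assume H2 ≠ 0), and suppose J > 2‖H1‖. Then λ(H1 + H2) ≥ λ(H1|_𝒮) − ‖H1‖²/(J − 2‖H1‖), where λ(H1|_𝒮) denotes the minimum of ⟨v, H1 v⟩ over unit vectors v ∈ 𝒮. -/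
/-!
Split a vector `w = v + u` along `ker H2 ⊕ (ker H2)ᗮ`. In an eigenbasis of `H2` one sees
`⟪u, H2 u⟫ ≥ J ‖u‖²`, while `⟪v, H1 v⟫ ≥ λ(H1|_𝒮) ‖v‖²` and the remaining terms of
`⟪w, H1 w⟫` are at least `-2‖H1‖‖v‖‖u‖ - ‖H1‖‖u‖²`. Completing the square in `‖u‖`, the worst
case of this quadratic form costs exactly `‖H1‖² / (J - 2‖H1‖)`.
-/

section

open RCLike Module.End LinearMap
open scoped InnerProductSpace

variable {𝕜 E : Type*} [RCLike 𝕜] [NormedAddCommGroup E] [InnerProductSpace 𝕜 E]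

theorem sub_sq_div_mul_sq_add_sq_le {a h J : ℝ} (hJ : 2 * h < J) (ha : a ≤ h) (c s : ℝ) :
    (a - h ^ 2 / (J - 2 * h)) * (c ^ 2 + s ^ 2) ≤
      a * c ^ 2 - 2 * (h * c * s) + (J - h) * s ^ 2 := by
  have hg : 0 < J - 2 * h := by linarith
  set q := h ^ 2 / (J - 2 * h)
  have hq : q * (J - 2 * h) = h ^ 2 := div_mul_cancel₀ _ hg.ne'
  -- multiplied by `J - 2h`, this is the square `(h c - (J - 2h) s)²`
  have hsq : 0 ≤ q * c ^ 2 - 2 * (h * c * s) + (J - 2 * h) * s ^ 2 := by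
    refine nonneg_of_mul_nonneg_left ?_ hg
    nlinarith [sq_nonneg (h * c - (J - 2 * h) * s)]
  nlinarith [mul_nonneg (div_nonneg (sq_nonneg h) hg.le) (sq_nonneg s),
    mul_le_mul_of_nonneg_right ha (sq_nonneg s)]

namespace LinearMap.IsSymmetric

variable {T : E →ₗ[𝕜] E}

theorem re_inner_add_apply_add (hT : T.IsSymmetric) (x y : E) :
    re ⟪x + y, T (x + y)⟫_𝕜 = re ⟪x, T x⟫_𝕜 + 2 * re ⟪x, T y⟫_𝕜 + re ⟪y, T y⟫_𝕜 := by
  have hyx : re ⟪y, T x⟫_𝕜 = re ⟪x, T y⟫_𝕜 := by rw [← hT, ← inner_conj_symm, conj_re]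
  simp only [map_add, inner_add_left, inner_add_right, hyx]
  ring

theorem re_inner_apply_eq_sum [FiniteDimensional 𝕜 E] (hT : T.IsSymmetric) {n : ℕ}
    (hn : Module.finrank 𝕜 E = n) (u : E) :
    re ⟪u, T u⟫_𝕜 = ∑ i, hT.eigenvalues hn i * ‖⟪hT.eigenvectorBasis hn i, u⟫_𝕜‖ ^ 2 := by
  set b := hT.eigenvectorBasis hn
  have hb (i) : ⟪b i, T u⟫_𝕜 = hT.eigenvalues hn i * ⟪b i, u⟫_𝕜 := by
    rw [← hT, hT.apply_eigenvectorBasis, inner_smul_left, conj_ofReal]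
  rw [← b.sum_inner_mul_inner, map_sum]
  refine Finset.sum_congr rfl fun i _ => ?_
  rw [hb, mul_left_comm, ← inner_conj_symm, RCLike.conj_mul, ← ofReal_pow, ← ofReal_mul, ofReal_re]

theorem mul_norm_sq_le_re_inner_apply_of_mem_orthogonal_ker [FiniteDimensional 𝕜 E]
    (hT : T.IsSymmetric) {J : ℝ} (hJ : J ∈ lowerBounds {r : ℝ | r ≠ 0 ∧ HasEigenvalue T r})
    {u : E} (hu : u ∈ (ker T)ᗮ) : J * ‖u‖ ^ 2 ≤ re ⟪u, T u⟫_𝕜 := by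
  rw [hT.re_inner_apply_eq_sum rfl, ← (hT.eigenvectorBasis rfl).sum_sq_norm_inner_right,
    Finset.mul_sum]
  refine Finset.sum_le_sum fun i _ => ?_
  by_cases hμ : hT.eigenvalues rfl i = 0
  · have hbi : hT.eigenvectorBasis rfl i ∈ ker T := by simp [hμ]
    simp [Submodule.inner_right_of_mem_orthogonal hbi hu]
  · exact mul_le_mul_of_nonneg_right (hJ ⟨hμ, hT.hasEigenvalue_eigenvalues rfl i⟩) (by positivity)

end LinearMap.IsSymmetric

namespace ContinuousLinearMap

theorem abs_re_inner_apply_le (A : E →L[𝕜] E) (x y : E) :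
    |re ⟪x, A y⟫_𝕜| ≤ ‖A‖ * ‖x‖ * ‖y‖ :=
  calc |re ⟪x, A y⟫_𝕜| ≤ ‖⟪x, A y⟫_𝕜‖ := abs_re_le_norm _
    _ ≤ ‖x‖ * ‖A y‖ := norm_inner_le_norm _ _
    _ ≤ ‖x‖ * (‖A‖ * ‖y‖) := by gcongr; exact A.le_opNorm y
    _ = ‖A‖ * ‖x‖ * ‖y‖ := by ring

/-- `λ(A|_K)` in the notation of the projection lemma. -/
noncomputable def rayleighInf (A : E →L[𝕜] E) (K : Submodule 𝕜 E) : ℝ :=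
  sInf {r | ∃ v : E, ‖v‖ = 1 ∧ v ∈ K ∧ r = re ⟪v, A v⟫_𝕜}

theorem rayleighInf_mul_norm_sq_le (A : E →L[𝕜] E) {K : Submodule 𝕜 E} {v : E} (hv : v ∈ K) :
    A.rayleighInf K * ‖v‖ ^ 2 ≤ re ⟪v, A v⟫_𝕜 := by
  rcases eq_or_ne v 0 with rfl | hv0
  · simp
  have hbdd : BddBelow {r | ∃ v : E, ‖v‖ = 1 ∧ v ∈ K ∧ r = re ⟪v, A v⟫_𝕜} := by
    refine ⟨-‖A‖, ?_⟩
    rintro _ ⟨w, hw, -, rfl⟩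
    simpa [hw] using neg_le_of_abs_le (A.abs_re_inner_apply_le w w)
  set w : E := (‖v‖⁻¹ : 𝕜) • v
  have hw : re ⟪w, A w⟫_𝕜 = re ⟪v, A v⟫_𝕜 / ‖v‖ ^ 2 := by
    simp only [w, map_smul, inner_smul_left, inner_smul_right, ← ofReal_inv, conj_ofReal,
      ← mul_assoc, ← ofReal_mul, re_ofReal_mul]
    field_simp
  have := csInf_le hbdd ⟨w, norm_smul_inv_norm hv0, K.smul_mem _ hv, rfl⟩
  rwa [hw, le_div_iff₀ (by positivity)] at this

theorem rayleighInf_le_opNorm (A : E →L[𝕜] E) {K : Submodule 𝕜 E} (hK : K ≠ ⊥) :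
    A.rayleighInf K ≤ ‖A‖ := by
  obtain ⟨v, hvK, hv0⟩ := Submodule.exists_mem_ne_zero_of_ne_bot hK
  refine le_of_mul_le_mul_right ?_ (by positivity : 0 < ‖v‖ ^ 2)
  calc A.rayleighInf K * ‖v‖ ^ 2 ≤ re ⟪v, A v⟫_𝕜 := A.rayleighInf_mul_norm_sq_le hvK
    _ ≤ ‖A‖ * ‖v‖ * ‖v‖ := le_of_abs_le (A.abs_re_inner_apply_le v v)
    _ = ‖A‖ * ‖v‖ ^ 2 := by ring

theorem rayleighInf_ker_sub_mul_norm_sq_le [FiniteDimensional 𝕜 E] {A B : E →L[𝕜] E}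
    (hA : (A : E →ₗ[𝕜] E).IsSymmetric) (hB : (B : E →ₗ[𝕜] E).IsSymmetric)
    (hker : ker (B : E →ₗ[𝕜] E) ≠ ⊥) {J : ℝ}
    (hJ : J ∈ lowerBounds {r : ℝ | r ≠ 0 ∧ HasEigenvalue (B : E →ₗ[𝕜] E) r})
    (hgap : 2 * ‖A‖ < J) (w : E) :
    (A.rayleighInf (ker (B : E →ₗ[𝕜] E)) - ‖A‖ ^ 2 / (J - 2 * ‖A‖)) * ‖w‖ ^ 2 ≤
      re ⟪w, (A + B) w⟫_𝕜 := by
  set K := ker (B : E →ₗ[𝕜] E)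
  set v := K.starProjection w
  set u := w - v
  have hvK : v ∈ K := K.starProjection_apply_mem w
  have huK : u ∈ Kᗮ := K.sub_starProjection_mem_orthogonal w
  have hBv : B v = 0 := hvK
  have hw : w = v + u := (add_sub_cancel v w).symm
  have hnorm : ‖w‖ ^ 2 = ‖v‖ ^ 2 + ‖u‖ ^ 2 := by
    rw [hw, @norm_add_sq 𝕜, Submodule.inner_right_of_mem_orthogonal hvK huK, map_zero,
      mul_zero, add_zero]
  have hAw : A.rayleighInf K * ‖v‖ ^ 2 - 2 * (‖A‖ * ‖v‖ * ‖u‖) - ‖A‖ * ‖u‖ ^ 2 ≤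
      re ⟪w, A w⟫_𝕜 := by
    rw [hw, ← A.coe_coe, hA.re_inner_add_apply_add, A.coe_coe]
    have hvv := A.rayleighInf_mul_norm_sq_le hvK
    have hvu := neg_le_of_abs_le (A.abs_re_inner_apply_le v u)
    have huu := neg_le_of_abs_le (A.abs_re_inner_apply_le u u)
    nlinarith
  have hBw : J * ‖u‖ ^ 2 ≤ re ⟪w, B w⟫_𝕜 := by
    rw [hw, ← B.coe_coe, hB.re_inner_add_apply_add, ← hB v u, B.coe_coe, hBv, inner_zero_left,
      inner_zero_right, map_zero, mul_zero, zero_add, zero_add]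
    exact hB.mul_norm_sq_le_re_inner_apply_of_mem_orthogonal_ker hJ huK
  calc _ = (A.rayleighInf K - ‖A‖ ^ 2 / (J - 2 * ‖A‖)) * (‖v‖ ^ 2 + ‖u‖ ^ 2) := by rw [hnorm]
    _ ≤ A.rayleighInf K * ‖v‖ ^ 2 - 2 * (‖A‖ * ‖v‖ * ‖u‖) + (J - ‖A‖) * ‖u‖ ^ 2 :=
      sub_sq_div_mul_sq_add_sq_le hgap (A.rayleighInf_le_opNorm hker) _ _
    _ ≤ re ⟪w, A w⟫_𝕜 + re ⟪w, B w⟫_𝕜 := by linarith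
    _ = re ⟪w, (A + B) w⟫_𝕜 := by rw [_root_.add_apply, inner_add_right, map_add]

end ContinuousLinearMap

end

theorem projection_lemma_general {V : Type*} [NormedAddCommGroup V] [InnerProductSpace ℂ V]
    [FiniteDimensional ℂ V]
    (H1 H2 : V →L[ℂ] V) (hH1 : IsSelfAdjoint H1) (hH2 : IsSelfAdjoint H2)
    (hker : ∃ v : V, v ≠ 0 ∧ H2 v = 0)
    (J : ℝ)
    (hJ : IsLeast {r : ℝ | r ≠ 0 ∧
      Module.End.HasEigenvalue (H2 : V →ₗ[ℂ] V) (r : ℂ)} J)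
    (hgap : 2 * ‖H1‖ < J) :
    ∀ lam : ℝ, Module.End.HasEigenvalue ((H1 + H2 : V →L[ℂ] V) : V →ₗ[ℂ] V) (lam : ℂ) →
      sInf {r : ℝ | ∃ v : V, ‖v‖ = 1 ∧ H2 v = 0 ∧ r = (inner ℂ v (H1 v) : ℂ).re}
        - ‖H1‖ ^ 2 / (J - 2 * ‖H1‖) ≤ lam := by
  intro lam hlam
  obtain ⟨w, hw⟩ := hlam.exists_hasEigenvector
  have hquad : RCLike.re (inner ℂ w ((H1 + H2) w)) = lam * ‖w‖ ^ 2 := by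
    rw [← ContinuousLinearMap.coe_coe, hw.apply_eq_smul, inner_smul_right]
    exact (RCLike.re_ofReal_mul lam _).trans (congrArg (lam * ·) (inner_self_eq_norm_sq w))
  obtain ⟨v, hv0, hv⟩ := hker
  have hbound := ContinuousLinearMap.rayleighInf_ker_sub_mul_norm_sq_le hH1.isSymmetric
    hH2.isSymmetric ((Submodule.ne_bot_iff _).mpr ⟨v, hv, hv0⟩) hJ.2 hgap w
  rw [hquad] at hbound
  change H1.rayleighInf (LinearMap.ker (H2 : V →ₗ[ℂ] V)) - _ ≤ lam
  exact le_of_mul_le_mul_right hbound (pow_pos (norm_pos_iff.mpr hw.2) 2)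

/-- **Projection lemma.** Let `H1, H2` be Hermitian operators on a nonzero
finite-dimensional complex inner product space, with `H2` positive semidefinite,
`𝒮 = ker H2` nonzero, `J` the smallest nonzero eigenvalue of `H2` (so `H2 ≠ 0`),
and `J > 2‖H1‖`.  Then every eigenvalue `lam` of `H1 + H2` satisfies
`lam ≥ λ(H1|_𝒮) − ‖H1‖²/(J − 2‖H1‖)`, where `λ(H1|_𝒮)` is the minimum of
`⟨v, H1 v⟩` over unit vectors `v ∈ 𝒮`. -/
theorem projection_lemma {V : Type*} [NormedAddCommGroup V] [InnerProductSpace ℂ V]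
    [FiniteDimensional ℂ V] [Nontrivial V]
    (H1 H2 : V →L[ℂ] V) (hH1 : IsSelfAdjoint H1) (hH2 : IsSelfAdjoint H2)
    (hpsd : ∀ v : V, 0 ≤ (inner ℂ v (H2 v) : ℂ).re)
    (hker : ∃ v : V, v ≠ 0 ∧ H2 v = 0)
    (hH2ne : H2 ≠ 0)
    (J : ℝ)
    (hJ : IsLeast {r : ℝ | r ≠ 0 ∧
      Module.End.HasEigenvalue (H2 : V →ₗ[ℂ] V) (r : ℂ)} J)
    (hgap : 2 * ‖H1‖ < J) :
    ∀ lam : ℝ, Module.End.HasEigenvalue ((H1 + H2 : V →L[ℂ] V) : V →ₗ[ℂ] V) (lam : ℂ) →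
      sInf {r : ℝ | ∃ v : V, ‖v‖ = 1 ∧ H2 v = 0 ∧ r = (inner ℂ v (H1 v) : ℂ).re}
        - ‖H1‖ ^ 2 / (J - 2 * ‖H1‖) ≤ lam :=
  projection_lemma_general H1 H2 hH1 hH2 hker J hJ hgap
end

section
/- Let n ≥ 1 be a natural number, let H be a Hermitian operator on ℂ^{2^n}, let a < b be reals, let β ≥ n/(b−a), let δ ∈ (0,1) satisfy (1−δ)/(1+δ) ≥ e^{−0.3n}, and set Z = tr(exp(−βH)). Let Z̃ be any real with (1−δ)Z ≤ Z̃ ≤ (1+δ)Z. Then: (i) if λ(H) ≤ a, then Z̃ ≥ (1−δ)e^{−βa}; and (ii) if λ(H) ≥ b, then Z̃ ≤ (1+δ)·2^n·e^{−βb} ≤ (1−δ)e^{−βa}. Hence comparing Z̃ with the threshold (1−δ)e^{−βa} decides whether λ(H) ≤ a or λ(H) ≥ b. -/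
/-!
Diagonalising `H = U diag(λ) U⋆` gives `Z = ∑ᵢ exp(-β λᵢ)`. One eigenvalue `≤ a` already
contributes `e^{-βa}`, while if all `2ⁿ` eigenvalues are `≥ b` then `Z ≤ 2ⁿ e^{-βb}`. Since
`2ⁿ ≤ e^{0.7 n}` and `β (b - a) ≥ n`, the second bound is at most `e^{-0.3 n} e^{-βa}`, and the
hypothesis on `δ` absorbs the factor `e^{-0.3 n}` into the ratio `(1 - δ) / (1 + δ)`.
-/

open NormedSpace in
lemma RCLike.exp_ofReal {𝕜 : Type*} [RCLike 𝕜] (x : ℝ) : exp (x : 𝕜) = (Real.exp x : 𝕜) := by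
  rw [Real.exp_eq_exp_ℝ]
  exact (map_exp (algebraMap ℝ 𝕜) RCLike.continuous_ofReal x).symm

namespace Matrix

open NormedSpace

variable {n 𝕜 : Type*} [RCLike 𝕜] [Fintype n] [DecidableEq n]

lemma trace_exp_conjStarAlgAut (u : unitary (Matrix n n 𝕜)) (X : Matrix n n 𝕜) :
    (exp (Unitary.conjStarAlgAut 𝕜 _ u X)).trace = (exp X).trace := by
  have h : exp ((u : Matrix n n 𝕜) * X * star (u : Matrix n n 𝕜)) =
      u * exp X * star (u : Matrix n n 𝕜) :=
    exp_units_conj (Unitary.toUnits u) X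
  rw [Unitary.conjStarAlgAut_apply, h, trace_mul_cycle, Unitary.coe_star_mul_self, one_mul]

lemma IsHermitian.re_trace_exp_neg_smul {A : Matrix n n 𝕜} (hA : A.IsHermitian) (β : ℝ) :
    RCLike.re (NormedSpace.exp ((-(β : 𝕜)) • A)).trace = ∑ i, Real.exp (-β * hA.eigenvalues i) := by
  have hdiag : (-(β : 𝕜)) • A = Unitary.conjStarAlgAut 𝕜 _ hA.eigenvectorUnitary
      (diagonal fun i ↦ ((-β * hA.eigenvalues i : ℝ) : 𝕜)) := by
    conv_lhs => rw [hA.spectral_theorem]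
    rw [← map_smul, ← diagonal_smul]
    congr! with i
    simp
  rw [hdiag, trace_exp_conjStarAlgAut, exp_diagonal, trace_diagonal, map_sum]
  simp only [Pi.exp_def, RCLike.exp_ofReal, RCLike.ofReal_re]

end Matrix

open Real

lemma exp_neg_mul_le_sum_exp_neg_mul {ι : Type*} [Fintype ι] {β a : ℝ} (hβ : 0 ≤ β)
    (μ : ι → ℝ) (i : ι) (hi : μ i ≤ a) : exp (-β * a) ≤ ∑ j, exp (-β * μ j) :=
  calc exp (-β * a) ≤ exp (-β * μ i) := exp_le_exp.mpr (by nlinarith)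
    _ ≤ ∑ j, exp (-β * μ j) :=
        Finset.single_le_sum (f := fun j ↦ exp (-β * μ j)) (fun j _ ↦ (exp_pos _).le)
          (Finset.mem_univ i)

lemma sum_exp_neg_mul_le_card_mul {ι : Type*} [Fintype ι] {β b : ℝ} (hβ : 0 ≤ β)
    (μ : ι → ℝ) (hμ : ∀ i, b ≤ μ i) : ∑ i, exp (-β * μ i) ≤ Fintype.card ι * exp (-β * b) :=
  calc ∑ i, exp (-β * μ i) ≤ ∑ _i : ι, exp (-β * b) :=
        Finset.sum_le_sum fun i _ ↦ exp_le_exp.mpr (by nlinarith [hμ i])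
    _ = Fintype.card ι * exp (-β * b) := by simp

lemma two_pow_le_exp (n : ℕ) : (2 : ℝ) ^ n ≤ exp (0.7 * n) := by
  have hlog : log 2 ≤ 0.7 := (log_two_lt_d9.trans (by norm_num)).le
  calc (2 : ℝ) ^ n = exp (n * log 2) := by rw [exp_nat_mul, exp_log two_pos]
    _ ≤ exp (0.7 * n) := exp_le_exp.mpr (by nlinarith [n.cast_nonneg (α := ℝ)])

lemma two_pow_mul_exp_neg_mul_le {n : ℕ} {a b β : ℝ} (h : n ≤ β * (b - a)) :
    2 ^ n * exp (-β * b) ≤ exp (-(0.3) * n) * exp (-β * a) :=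
  calc (2 : ℝ) ^ n * exp (-β * b) ≤ exp (0.7 * n) * exp (-β * b) := by
        gcongr; exact two_pow_le_exp n
    _ ≤ exp (-(0.3) * n) * exp (-β * a) := by
        rw [← exp_add, ← exp_add]; exact exp_le_exp.mpr (by linarith)

theorem decide_LH_from_QPF_general (n : ℕ)
    (H : Matrix (Fin (2 ^ n)) (Fin (2 ^ n)) ℂ) (hH : H.IsHermitian)
    (a b β δ Zt : ℝ) (hab : a < b) (hβ : (n : ℝ) / (b - a) ≤ β)
    (hδ : Real.exp (-(0.3) * n) ≤ (1 - δ) / (1 + δ))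
    (hZlo : (1 - δ) * (Matrix.trace (NormedSpace.exp ((-(β : ℂ)) • H))).re ≤ Zt)
    (hZhi : Zt ≤ (1 + δ) * (Matrix.trace (NormedSpace.exp ((-(β : ℂ)) • H))).re) :
    ((∃ i, hH.eigenvalues i ≤ a) → (1 - δ) * Real.exp (-β * a) ≤ Zt) ∧
    ((∀ i, b ≤ hH.eigenvalues i) →
      Zt ≤ (1 + δ) * 2 ^ n * Real.exp (-β * b) ∧
      (1 + δ) * 2 ^ n * Real.exp (-β * b) ≤ (1 - δ) * Real.exp (-β * a)) := by
  have hba : 0 < b - a := sub_pos.mpr hab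
  have hgap : (n : ℝ) ≤ β * (b - a) := (div_le_iff₀ hba).mp hβ
  have hβ0 : 0 ≤ β := (div_nonneg n.cast_nonneg hba.le).trans hβ
  -- `(1 - δ) / (1 + δ) > 0`, and the two factors cannot both be negative as they sum to `2`.
  obtain ⟨hminus, hplus⟩ : 0 < 1 - δ ∧ 0 < 1 + δ := by
    rcases div_pos_iff.mp ((exp_pos _).trans_le hδ) with h | ⟨h₁, h₂⟩
    · exact h
    · linarith
  have hZ : (Matrix.trace (NormedSpace.exp ((-(β : ℂ)) • H))).re =
      ∑ i, exp (-β * hH.eigenvalues i) := hH.re_trace_exp_neg_smul β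
  rw [hZ] at hZlo hZhi
  refine ⟨fun ⟨i, hi⟩ ↦ ?_, fun hb ↦ ⟨?_, ?_⟩⟩
  · calc (1 - δ) * exp (-β * a) ≤ (1 - δ) * ∑ i, exp (-β * hH.eigenvalues i) := by
          gcongr; exact exp_neg_mul_le_sum_exp_neg_mul hβ0 _ i hi
      _ ≤ Zt := hZlo
  · calc Zt ≤ (1 + δ) * ∑ i, exp (-β * hH.eigenvalues i) := hZhi
      _ ≤ (1 + δ) * (2 ^ n * exp (-β * b)) := by
          gcongr; simpa using sum_exp_neg_mul_le_card_mul hβ0 _ hb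
      _ = (1 + δ) * 2 ^ n * exp (-β * b) := by ring
  · calc (1 + δ) * 2 ^ n * exp (-β * b)
          ≤ (1 + δ) * (exp (-(0.3) * n) * exp (-β * a)) := by
          rw [mul_assoc]; exact mul_le_mul_of_nonneg_left (two_pow_mul_exp_neg_mul_le hgap) hplus.le
      _ ≤ (1 + δ) * ((1 - δ) / (1 + δ) * exp (-β * a)) := by gcongr
      _ = (1 - δ) * exp (-β * a) := by field_simp

/-- Deciding the local Hamiltonian problem from an approximation of the quantum
partition function.  For a Hermitian `H` on `ℂ^{2^n}`, `a < b`, `β ≥ n/(b−a)`,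
`δ ∈ (0,1)` with `(1−δ)/(1+δ) ≥ e^{−0.3n}`, `Z = tr(exp(−βH))` and any `Z̃` with
`(1−δ)Z ≤ Z̃ ≤ (1+δ)Z`:
(i) if `λ(H) ≤ a` then `Z̃ ≥ (1−δ)e^{−βa}`;
(ii) if `λ(H) ≥ b` then `Z̃ ≤ (1+δ)·2^n·e^{−βb} ≤ (1−δ)e^{−βa}`. -/
theorem decide_LH_from_QPF (n : ℕ) (hn : 1 ≤ n)
    (H : Matrix (Fin (2 ^ n)) (Fin (2 ^ n)) ℂ) (hH : H.IsHermitian)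
    (a b β δ Zt : ℝ) (hab : a < b) (hβ : (n : ℝ) / (b - a) ≤ β)
    (hδ0 : 0 < δ) (hδ1 : δ < 1)
    (hδ : Real.exp (-(0.3) * n) ≤ (1 - δ) / (1 + δ))
    (hZlo : (1 - δ) * (Matrix.trace (NormedSpace.exp ((-(β : ℂ)) • H))).re ≤ Zt)
    (hZhi : Zt ≤ (1 + δ) * (Matrix.trace (NormedSpace.exp ((-(β : ℂ)) • H))).re) :
    ((∃ i, hH.eigenvalues i ≤ a) → (1 - δ) * Real.exp (-β * a) ≤ Zt) ∧
    ((∀ i, b ≤ hH.eigenvalues i) →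
      Zt ≤ (1 + δ) * 2 ^ n * Real.exp (-β * b) ∧
      (1 + δ) * 2 ^ n * Real.exp (-β * b) ≤ (1 - δ) * Real.exp (-β * a)) :=
  decide_LH_from_QPF_general n H hH a b β δ Zt hab hβ hδ hZlo hZhi
end

section
/- Let N ≥ 1 and T ≥ 1 be natural numbers, let β > 0, set Δ = β/T, and let E : {1,…,N} → ℝ satisfy 0 ≤ E_p < 1 for all p. Let δ ∈ [0,1). For each j ∈ {1,…,T} let M_j = #{p : (j−1)/T ≤ E_p < j/T}, let M'_j = #{p : (2j−3)/(2T) ≤ E_p < (2j+1)/(2T)}, and let M̃_j be a real number with (1−δ)M_j ≤ M̃_j ≤ (1+δ)M'_j. Then, writing Z = Σ_{p=1}^{N} e^{−βE_p}, it holds that (1−δ)Z ≤ Σ_{j=1}^{T} M̃_j e^{−(j−1)Δ} ≤ (1+δ)(1 + e^{Δ} + e^{2Δ})Z. -/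
/-!
Both bounds come from double counting, `∑_j #{p | P j p} w_j = ∑_p ∑_{j | P j p} w_j`, so it
suffices to compare `e^{-βx}` with `∑ e^{-jΔ}` over the bins containing a single energy `x`.
The bin `j = ⌊T x⌋` contains `x`, and `jΔ ≤ βx`. The enlarged bins containing `x`
have indices in `{k - 1, k, k + 1}` for `k = ⌊T x⌋`, and `βx < (k + 1)Δ`, which gives the factor
`1 + e^Δ + e^{2Δ}`.
-/

open Finset Real

theorem sum_ncard_mul_eq_sum_sum_filter {ι κ R : Type*} [Fintype ι] [Fintype κ]
    [NonAssocSemiring R] (P : κ → ι → Prop) [∀ j p, Decidable (P j p)] (w : κ → R) :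
    ∑ j, ({p | P j p}.ncard : R) * w j = ∑ p, ∑ j with P j p, w j := by
  simp only [Set.ncard_eq_toFinset_card', Set.toFinset_ofPred, ← nsmul_eq_mul, ← sum_const,
    sum_filter]
  exact sum_comm

theorem sum_exp_neg_mul_Icc_le {Δ : ℝ} (k : ℤ) {s : Finset ℤ} (hs : s ⊆ Icc (k - 1) (k + 1)) :
    ∑ j ∈ s, exp (-j * Δ) ≤ (1 + exp Δ + exp (2 * Δ)) * exp (-(k + 1) * Δ) := by
  have hIcc : Icc (k - 1) (k + 1) = {k - 1, k, k + 1} := by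
    ext j; simp only [mem_Icc, mem_insert, mem_singleton]; omega
  calc ∑ j ∈ s, exp (-j * Δ)
      ≤ ∑ j ∈ Icc (k - 1) (k + 1), exp (-j * Δ) :=
        sum_le_sum_of_subset_of_nonneg hs fun _ _ _ => (exp_pos _).le
    _ = exp (-(k - 1) * Δ) + exp (-k * Δ) + exp (-(k + 1) * Δ) := by
        rw [hIcc, sum_insert (by simp only [mem_insert, mem_singleton]; omega),
          sum_insert (by simp only [mem_singleton]; omega), sum_singleton]
        push_cast; ring
    _ = _ := by
        rw [show -((k : ℝ) - 1) * Δ = 2 * Δ + -(k + 1) * Δ by ring,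
          show -(k : ℝ) * Δ = Δ + -(k + 1) * Δ by ring, exp_add, exp_add]
        ring

theorem sum_exp_neg_mul_le_of_forall_near {Δ : ℝ} (hΔ : 0 ≤ Δ) {y : ℝ} {s : Finset ℤ}
    (hs : ∀ j ∈ s, (j : ℝ) - 1 / 2 ≤ y ∧ y < j + 3 / 2) :
    ∑ j ∈ s, exp (-j * Δ) ≤ (1 + exp Δ + exp (2 * Δ)) * exp (-y * Δ) := by
  have hs' : s ⊆ Icc (⌊y⌋ - 1) (⌊y⌋ + 1) := by
    intro j hj
    obtain ⟨hlo, hhi⟩ := hs j hj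
    have h1 : j < ⌊y⌋ + 2 := by
      exact_mod_cast (by linarith [Int.lt_floor_add_one y] : (j : ℝ) < ⌊y⌋ + 2)
    have h2 : ⌊y⌋ < j + 2 := by
      exact_mod_cast (by linarith [Int.floor_le y] : (⌊y⌋ : ℝ) < j + 2)
    rw [mem_Icc]
    omega
  calc ∑ j ∈ s, exp (-j * Δ)
      ≤ (1 + exp Δ + exp (2 * Δ)) * exp (-(⌊y⌋ + 1) * Δ) := by
        exact_mod_cast sum_exp_neg_mul_Icc_le ⌊y⌋ hs'
    _ ≤ (1 + exp Δ + exp (2 * Δ)) * exp (-y * Δ) := by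
        gcongr
        linarith [Int.lt_floor_add_one y]

theorem exp_neg_mul_le_sum_exp_neg_mul_bin {β : ℝ} (hβ : 0 ≤ β) {T : ℕ} (hT : 0 < T) {x : ℝ}
    (hx0 : 0 ≤ x) (hx1 : x < 1) :
    exp (-β * x) ≤
      ∑ j with ((j : Fin T) : ℝ) / T ≤ x ∧ x < ((j : ℝ) + 1) / T, exp (-(j : ℝ) * (β / T)) := by
  have hT' : (0 : ℝ) < T := by exact_mod_cast hT
  have hTx : 0 ≤ T * x := by positivity
  have hfloor : ⌊T * x⌋₊ < T := by
    rw [Nat.floor_lt hTx]; nlinarith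
  let j₀ : Fin T := ⟨⌊T * x⌋₊, hfloor⟩
  have hj₀ : (j₀ : ℝ) / T ≤ x ∧ x < ((j₀ : ℝ) + 1) / T := by
    rw [div_le_iff₀ hT', lt_div_iff₀ hT', mul_comm x]
    exact ⟨Nat.floor_le hTx, Nat.lt_floor_add_one _⟩
  calc exp (-β * x) ≤ exp (-(j₀ : ℝ) * (β / T)) := by
        rw [exp_le_exp, neg_mul, neg_mul, neg_le_neg_iff, ← mul_div_assoc, div_le_iff₀ hT']
        nlinarith [Nat.floor_le hTx]
    _ ≤ _ := single_le_sum (f := fun j : Fin T => exp (-(j : ℝ) * (β / T)))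
        (fun _ _ => (exp_pos _).le) (mem_filter.mpr ⟨mem_univ _, hj₀⟩)

theorem sum_exp_neg_mul_le_of_forall_mem_window {β : ℝ} (hβ : 0 ≤ β) {T : ℕ} (hT : 0 < T) {x : ℝ}
    {s : Finset (Fin T)}
    (hs : ∀ j ∈ s, (2 * (j : ℝ) - 1) / (2 * T) ≤ x ∧ x < (2 * (j : ℝ) + 3) / (2 * T)) :
    ∑ j ∈ s, exp (-(j : ℝ) * (β / T)) ≤ (1 + exp (β / T) + exp (2 * (β / T))) * exp (-β * x) := by
  have hT' : (0 : ℝ) < T := by exact_mod_cast hT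
  have hinj : Set.InjOn (fun j : Fin T => ((j : ℕ) : ℤ)) s :=
    fun _ _ _ _ h => Fin.ext (Nat.cast_injective h)
  calc ∑ j ∈ s, exp (-(j : ℝ) * (β / T))
      = ∑ m ∈ s.image fun j : Fin T => ((j : ℕ) : ℤ), exp (-(m : ℝ) * (β / T)) := by
        rw [sum_image hinj]; push_cast; rfl
    _ ≤ (1 + exp (β / T) + exp (2 * (β / T))) * exp (-(T * x) * (β / T)) := by
        refine sum_exp_neg_mul_le_of_forall_near (by positivity) fun m hm => ?_
        obtain ⟨j, hj, rfl⟩ := mem_image.mp hm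
        have hj' := hs j hj
        rw [div_le_iff₀ (by positivity), lt_div_iff₀ (by positivity)] at hj'
        push_cast
        constructor <;> linarith [hj'.1, hj'.2]
    _ = (1 + exp (β / T) + exp (2 * (β / T))) * exp (-β * x) := by
        field_simp

theorem partition_function_from_counts_general (N T : ℕ) (hT : 1 ≤ T)
    (β : ℝ) (hβ : 0 < β)
    (E : Fin N → ℝ) (hE : ∀ p, 0 ≤ E p ∧ E p < 1)
    (δ : ℝ) (hδ0 : 0 ≤ δ) (hδ1 : δ < 1)
    (Mt : Fin T → ℝ)
    (hMlo : ∀ j : Fin T,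
      (1 - δ) * (Set.ncard {p : Fin N |
        (j : ℝ) / T ≤ E p ∧ E p < ((j : ℝ) + 1) / T} : ℝ) ≤ Mt j)
    (hMhi : ∀ j : Fin T,
      Mt j ≤ (1 + δ) * (Set.ncard {p : Fin N |
        (2 * (j : ℝ) - 1) / (2 * T) ≤ E p ∧ E p < (2 * (j : ℝ) + 3) / (2 * T)} : ℝ)) :
    (1 - δ) * (∑ p, Real.exp (-β * E p))
        ≤ ∑ j : Fin T, Mt j * Real.exp (-(j : ℝ) * (β / T)) ∧
    ∑ j : Fin T, Mt j * Real.exp (-(j : ℝ) * (β / T))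
        ≤ (1 + δ) * (1 + Real.exp (β / T) + Real.exp (2 * (β / T)))
            * ∑ p, Real.exp (-β * E p) := by
  constructor
  · calc (1 - δ) * ∑ p, exp (-β * E p)
        ≤ (1 - δ) * ∑ p, ∑ j with ((j : Fin T) : ℝ) / T ≤ E p ∧ E p < ((j : ℝ) + 1) / T,
            exp (-(j : ℝ) * (β / T)) := by
          gcongr with p
          exact exp_neg_mul_le_sum_exp_neg_mul_bin hβ.le hT (hE p).1 (hE p).2
      _ = ∑ j : Fin T, (1 - δ) * (Set.ncard {p : Fin N |
            (j : ℝ) / T ≤ E p ∧ E p < ((j : ℝ) + 1) / T} : ℝ) * exp (-(j : ℝ) * (β / T)) := by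
          rw [← sum_ncard_mul_eq_sum_sum_filter, mul_sum]
          simp only [mul_assoc]
      _ ≤ ∑ j : Fin T, Mt j * exp (-(j : ℝ) * (β / T)) := by
          gcongr with j
          exact hMlo j
  · calc ∑ j : Fin T, Mt j * exp (-(j : ℝ) * (β / T))
        ≤ ∑ j : Fin T, (1 + δ) * (Set.ncard {p : Fin N | (2 * (j : ℝ) - 1) / (2 * T) ≤ E p ∧
            E p < (2 * (j : ℝ) + 3) / (2 * T)} : ℝ) * exp (-(j : ℝ) * (β / T)) := by
          gcongr with j
          exact hMhi j
      _ = (1 + δ) * ∑ p, ∑ j with (2 * ((j : Fin T) : ℝ) - 1) / (2 * T) ≤ E p ∧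
            E p < (2 * (j : ℝ) + 3) / (2 * T), exp (-(j : ℝ) * (β / T)) := by
          rw [← sum_ncard_mul_eq_sum_sum_filter, mul_sum]
          simp only [mul_assoc]
      _ ≤ (1 + δ) * ∑ p, (1 + exp (β / T) + exp (2 * (β / T))) * exp (-β * E p) := by
          gcongr with p
          exact sum_exp_neg_mul_le_of_forall_mem_window hβ.le hT fun j hj => (mem_filter.mp hj).2
      _ = (1 + δ) * (1 + exp (β / T) + exp (2 * (β / T))) * ∑ p, exp (-β * E p) := by
          rw [← mul_sum, mul_assoc]

/-- Approximating a partition function by binned eigenvalue counts.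
With `T` bins of width `1/T` on the energy range `[0,1)`, `Δ = β/T`,
`M_j` the exact count in bin `j`, `M'_j` the count in bin `j` enlarged by half
a bin on each side, and `M̃_j` any real with `(1−δ)M_j ≤ M̃_j ≤ (1+δ)M'_j`,
the sum `Σ_j M̃_j e^{−(j−1)Δ}` approximates `Z = Σ_p e^{−βE_p}` as
`(1−δ)Z ≤ Σ_j M̃_j e^{−(j−1)Δ} ≤ (1+δ)(1+e^Δ+e^{2Δ})Z`.
(Bins are indexed here by `j : Fin T`, with `(j : ℕ)` playing the role of `j−1`.) -/
theorem partition_function_from_counts (N T : ℕ) (hN : 1 ≤ N) (hT : 1 ≤ T)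
    (β : ℝ) (hβ : 0 < β)
    (E : Fin N → ℝ) (hE : ∀ p, 0 ≤ E p ∧ E p < 1)
    (δ : ℝ) (hδ0 : 0 ≤ δ) (hδ1 : δ < 1)
    (Mt : Fin T → ℝ)
    (hMlo : ∀ j : Fin T,
      (1 - δ) * (Set.ncard {p : Fin N |
        (j : ℝ) / T ≤ E p ∧ E p < ((j : ℝ) + 1) / T} : ℝ) ≤ Mt j)
    (hMhi : ∀ j : Fin T,
      Mt j ≤ (1 + δ) * (Set.ncard {p : Fin N |
        (2 * (j : ℝ) - 1) / (2 * T) ≤ E p ∧ E p < (2 * (j : ℝ) + 3) / (2 * T)} : ℝ)) :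
    (1 - δ) * (∑ p, Real.exp (-β * E p))
        ≤ ∑ j : Fin T, Mt j * Real.exp (-(j : ℝ) * (β / T)) ∧
    ∑ j : Fin T, Mt j * Real.exp (-(j : ℝ) * (β / T))
        ≤ (1 + δ) * (1 + Real.exp (β / T) + Real.exp (2 * (β / T)))
            * ∑ p, Real.exp (-β * E p) :=
  partition_function_from_counts_general N T hT β hβ E hE δ hδ0 hδ1 Mt hMlo hMhi
end

section
/- For all real numbers θ and θ̃ and every real N > 0, setting M = N·sin²(θ/2) and Δθ = |θ̃ − θ|, it holds that |N·sin²(θ̃/2) − M| ≤ (√(2NM) + N·Δθ/2)·Δθ. -/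
/- Write `s = sin (θ/2)`, `s̃ = sin (θ̃/2)`. Since `sin` is 1-Lipschitz, `|s̃ - s| ≤ Δθ/2`, and
factoring `s̃² - s² = (s̃ - s)(s̃ - s + 2s)` gives `|s̃² - s²| ≤ (Δθ/2)(Δθ/2 + 2|s|)`.
Multiplying by `N` and using `N|s| ≤ √(2N·N s²)` yields the bound, with room to spare. -/

open Real

theorem abs_sq_sub_sq_le_of_abs_sub_le {R : Type*} [CommRing R] [LinearOrder R]
    [IsStrictOrderedRing R] {u v e : R} (h : |u - v| ≤ e) :
    |u ^ 2 - v ^ 2| ≤ e * (e + 2 * |v|) := by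
  have h_sum : |u - v + 2 * v| ≤ e + 2 * |v| := by
    refine (abs_add_le _ _).trans (add_le_add h ?_)
    rw [abs_mul, abs_two]
  calc |u ^ 2 - v ^ 2| = |u - v| * |u - v + 2 * v| := by rw [← abs_mul]; ring_nf
    _ ≤ e * (e + 2 * |v|) := mul_le_mul h h_sum (abs_nonneg _) ((abs_nonneg _).trans h)

theorem Real.abs_sin_sq_sub_sin_sq_le (x y : ℝ) :
    |sin x ^ 2 - sin y ^ 2| ≤ |x - y| * (|x - y| + 2 * |sin y|) :=
  abs_sq_sub_sq_le_of_abs_sub_le (abs_sin_sub_sin_le x y)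

theorem Real.mul_abs_sin_le_sqrt {N : ℝ} (hN : 0 ≤ N) (x : ℝ) :
    N * |sin x| ≤ √(2 * N * (N * sin x ^ 2)) := by
  refine (le_sqrt (by positivity) (by positivity)).mpr ?_
  rw [mul_pow, sq_abs]
  nlinarith [sq_nonneg (N * sin x)]

/-- Accuracy of amplitude (quantum counting) estimation: for reals `θ, θ̃` and
`N > 0`, with `M = N·sin²(θ/2)` and `Δθ = |θ̃ − θ|`,
`|N·sin²(θ̃/2) − M| ≤ (√(2NM) + N·Δθ/2)·Δθ`. -/
theorem quantum_counting_error (θ θt N : ℝ) (hN : 0 < N) :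
    |N * Real.sin (θt / 2) ^ 2 - N * Real.sin (θ / 2) ^ 2|
      ≤ (Real.sqrt (2 * N * (N * Real.sin (θ / 2) ^ 2)) + N * |θt - θ| / 2) * |θt - θ| := by
  set d := |θt - θ|
  have h_half : |θt / 2 - θ / 2| = d / 2 := by rw [← sub_div, abs_div, abs_two]
  have h_sq : |sin (θt / 2) ^ 2 - sin (θ / 2) ^ 2| ≤ d / 2 * (d / 2 + 2 * |sin (θ / 2)|) := by
    simpa only [h_half] using abs_sin_sq_sub_sin_sq_le (θt / 2) (θ / 2)
  have h_lin : N * |sin (θ / 2)| * d ≤ √(2 * N * (N * sin (θ / 2) ^ 2)) * d :=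
    mul_le_mul_of_nonneg_right (mul_abs_sin_le_sqrt hN.le _) (abs_nonneg _)
  rw [← mul_sub, abs_mul, abs_of_pos hN]
  calc N * |sin (θt / 2) ^ 2 - sin (θ / 2) ^ 2|
      ≤ N * (d / 2 * (d / 2 + 2 * |sin (θ / 2)|)) := mul_le_mul_of_nonneg_left h_sq hN.le
    _ ≤ _ := by nlinarith [mul_nonneg hN.le (sq_nonneg d)]
end

section
/- Let n, d be natural numbers with 1 ≤ d ≤ n. On the n-qubit space ℂ^{2^n} with computational basis vectors e_w indexed by bit strings w ∈ {0,1}^n, define H_stab := Σ_{S ⊆ {1,…,n}, |S|=d+1} P_S + (1/C(n,d))·Σ_{S ⊆ {1,…,n}, |S|=d} (I − P_S) − ((C(n,d)−1)/C(n,d))·I, where P_S is the diagonal orthogonal projection onto the span of basis states e_w with w_i = 1 for all i ∈ S. Then H_stab is positive semidefinite, its kernel is exactly the span of the basis states e_w with Hamming weight exactly d, and for every unit vector φ orthogonal to that span one has ⟨φ, H_stab φ⟩ ≥ 1/C(n,d). -/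
/-!
`H_stab` is diagonal in the computational basis: `P_S e_w = e_w` exactly when `S` lies in the
support of `w`, so on a basis state of Hamming weight `k` it acts by the scalar
`C(k, d+1) + (1 - C(k, d)) / C(n, d)`. This vanishes for `k = d`, equals `1 / C(n, d)` for
`k < d`, and for `d < k ≤ n` it is at least `1 + (1 - C(n, d)) / C(n, d) = 1 / C(n, d)`.
Positivity, the kernel and the gap are then read off from the diagonal.
-/

open scoped ComplexOrder

/-- The diagonal orthogonal projection (as a matrix on the `n`-qubit space, with
basis indexed by bit strings `w : Fin n → Bool`) onto the span of basis states
whose bits are `1` on every index of `S`. -/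
noncomputable def qubitOnesProj (n : ℕ) (S : Finset (Fin n)) :
    Matrix (Fin n → Bool) (Fin n → Bool) ℂ :=
  Matrix.diagonal fun w => if ∀ i ∈ S, w i = true then 1 else 0

/-- The clock-stabilizer Hamiltonian
`H_stab = Σ_{|S|=d+1} P_S + (1/C(n,d)) Σ_{|S|=d} (I − P_S) − ((C(n,d)−1)/C(n,d)) I`. -/
noncomputable def Hstab (n d : ℕ) : Matrix (Fin n → Bool) (Fin n → Bool) ℂ :=
  (∑ S ∈ (Finset.univ : Finset (Fin n)).powersetCard (d + 1), qubitOnesProj n S)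
    + ((n.choose d : ℂ))⁻¹ •
        (∑ S ∈ (Finset.univ : Finset (Fin n)).powersetCard d, (1 - qubitOnesProj n S))
    - (((n.choose d : ℂ) - 1) / (n.choose d : ℂ)) • 1

open Finset

namespace EuclideanSpace

variable {ι 𝕜 : Type*} [Fintype ι] [DecidableEq ι] [RCLike 𝕜]

lemma mem_span_single_one_iff (p : ι → Prop) (φ : EuclideanSpace 𝕜 ι) :
    φ ∈ Submodule.span 𝕜 {v | ∃ i, p i ∧ v = single i 1} ↔ ∀ i, ¬p i → φ i = 0 := by
  have hset : {v : EuclideanSpace 𝕜 ι | ∃ i, p i ∧ v = single i 1}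
      = (basisFun ι 𝕜).toBasis '' {i | p i} := by
    ext v
    simp [eq_comm]
  rw [hset, Module.Basis.mem_span_image]
  simp [Set.subset_def, not_imp_comm]

lemma apply_eq_zero_of_mem_orthogonal_span_single_one {p : ι → Prop} {φ : EuclideanSpace 𝕜 ι}
    (hφ : φ ∈ (Submodule.span 𝕜 {v | ∃ i, p i ∧ v = single i 1})ᗮ) {i : ι} (hi : p i) :
    φ i = 0 := by
  simpa [inner_single_left] using
    (Submodule.mem_orthogonal _ φ).1 hφ _ (Submodule.subset_span ⟨i, hi, rfl⟩)

end EuclideanSpace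

namespace Matrix

variable {ι 𝕜 : Type*} [Fintype ι] [DecidableEq ι] [RCLike 𝕜]

lemma ker_toEuclideanLin_diagonal (f : ι → 𝕜) :
    LinearMap.ker (toEuclideanLin (diagonal f))
      = Submodule.span 𝕜 {v | ∃ i, f i = 0 ∧ v = EuclideanSpace.single i 1} := by
  ext φ
  rw [LinearMap.mem_ker, EuclideanSpace.mem_span_single_one_iff]
  simp [toLpLin_apply, mulVec_diagonal, funext_iff, or_iff_not_imp_left]

lemma re_inner_toEuclideanLin_diagonal (f : ι → ℝ) (φ : EuclideanSpace 𝕜 ι) :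
    RCLike.re (inner 𝕜 φ (toEuclideanLin (diagonal fun i => (f i : 𝕜)) φ))
      = ∑ i, f i * ‖φ i‖ ^ 2 := by
  simp only [PiLp.inner_apply, toLpLin_apply, mulVec_diagonal, map_sum]
  refine sum_congr rfl fun i _ => ?_
  rw [RCLike.inner_apply, mul_assoc, RCLike.mul_conj]
  norm_cast

lemma mul_norm_sq_le_re_inner_toEuclideanLin_diagonal {f : ι → ℝ} {c : ℝ}
    {φ : EuclideanSpace 𝕜 ι} (h : ∀ i, φ i ≠ 0 → c ≤ f i) :
    c * ‖φ‖ ^ 2 ≤ RCLike.re (inner 𝕜 φ (toEuclideanLin (diagonal fun i => (f i : 𝕜)) φ)) := by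
  rw [re_inner_toEuclideanLin_diagonal, EuclideanSpace.norm_sq_eq, mul_sum]
  refine sum_le_sum fun i _ => ?_
  by_cases hi : φ i = 0
  · simp [hi]
  · exact mul_le_mul_of_nonneg_right (h i hi) (by positivity)

end Matrix

def hammingWeight {ι : Type*} [Fintype ι] (w : ι → Bool) : ℕ := #{i | w i = true}

lemma hammingWeight_le {ι : Type*} [Fintype ι] (w : ι → Bool) :
    hammingWeight w ≤ Fintype.card ι :=
  card_filter_le _ _

-- Generic in the decidability instance: for `ι = Fin n` the `if` in `qubitOnesProj` is decided
-- by `Nat.decidableForallFin`, not by `Finset.decidableDforallFinset`.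
lemma card_powersetCard_filter_forall_eq_true {ι : Type*} [Fintype ι] (m : ℕ) (w : ι → Bool)
    [DecidablePred fun S : Finset ι => ∀ i ∈ S, w i = true] :
    #{S ∈ powersetCard m univ | ∀ i ∈ S, w i = true} = (hammingWeight w).choose m := by
  rw [hammingWeight, ← card_powersetCard]
  congr 1
  ext S
  simp [mem_powersetCard, subset_iff, and_comm]

noncomputable def stabEnergy (n d k : ℕ) : ℝ :=
  k.choose (d + 1) + (1 - k.choose d) / n.choose d

lemma Hstab_eq_diagonal (n d : ℕ) :
    Hstab n d = Matrix.diagonal fun w => (stabEnergy n d (hammingWeight w) : ℂ) := by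
  ext w w'
  rcases eq_or_ne w w' with rfl | hne
  · simp only [Hstab, qubitOnesProj, Matrix.sub_apply, Matrix.add_apply, Matrix.smul_apply,
      Matrix.sum_apply, Matrix.diagonal_apply_eq, Matrix.one_apply_eq, smul_eq_mul]
    simp only [sum_boole, sum_sub_distrib, sum_const, card_powersetCard, card_univ,
      Fintype.card_fin, nsmul_eq_mul, mul_one, card_powersetCard_filter_forall_eq_true,
      stabEnergy]
    push_cast
    ring
  · simp only [Hstab, qubitOnesProj, Matrix.sub_apply, Matrix.add_apply, Matrix.smul_apply,
      Matrix.sum_apply, Matrix.diagonal_apply_ne _ hne, Matrix.one_apply_ne hne]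
    simp

lemma stabEnergy_self (n d : ℕ) : stabEnergy n d d = 0 := by
  simp [stabEnergy]

lemma one_div_choose_le_stabEnergy {n d k : ℕ} (hdn : d ≤ n) (hkn : k ≤ n) (hkd : k ≠ d) :
    1 / (n.choose d : ℝ) ≤ stabEnergy n d k := by
  have hN : (0 : ℝ) < n.choose d := by exact_mod_cast Nat.choose_pos hdn
  rcases hkd.lt_or_gt with hlt | hgt
  · simp [stabEnergy, Nat.choose_eq_zero_of_lt hlt,
      Nat.choose_eq_zero_of_lt (hlt.trans d.lt_succ_self)]
  · have h1 : (1 : ℝ) ≤ k.choose (d + 1) := by exact_mod_cast Nat.choose_pos hgt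
    have h2 : (k.choose d : ℝ) ≤ n.choose d := by exact_mod_cast Nat.choose_le_choose d hkn
    calc 1 / (n.choose d : ℝ) = 1 + (1 - n.choose d) / n.choose d := by field_simp; ring
      _ ≤ stabEnergy n d k := by unfold stabEnergy; gcongr

lemma stabEnergy_nonneg {n d k : ℕ} (hdn : d ≤ n) (hkn : k ≤ n) : 0 ≤ stabEnergy n d k := by
  rcases eq_or_ne k d with rfl | hkd
  · exact (stabEnergy_self n k).ge
  · exact (one_div_nonneg.2 (Nat.cast_nonneg _)).trans (one_div_choose_le_stabEnergy hdn hkn hkd)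

lemma stabEnergy_eq_zero_iff {n d k : ℕ} (hdn : d ≤ n) (hkn : k ≤ n) :
    stabEnergy n d k = 0 ↔ k = d := by
  refine ⟨fun h => ?_, fun h => h ▸ stabEnergy_self n k⟩
  by_contra hkd
  have hN : (0 : ℝ) < n.choose d := by exact_mod_cast Nat.choose_pos hdn
  exact (one_div_pos.2 hN).not_ge (h ▸ one_div_choose_le_stabEnergy hdn hkn hkd)

theorem Hstab_spectrum_general (n d : ℕ) (hdn : d ≤ n) :
    (Hstab n d).PosSemidef ∧
    LinearMap.ker (Matrix.toEuclideanLin (Hstab n d))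
      = Submodule.span ℂ {v : EuclideanSpace ℂ (Fin n → Bool) |
          ∃ w : Fin n → Bool,
            (Finset.univ.filter fun i => w i = true).card = d ∧
            v = EuclideanSpace.single w 1} ∧
    ∀ φ : EuclideanSpace ℂ (Fin n → Bool), ‖φ‖ = 1 →
      φ ∈ (Submodule.span ℂ {v : EuclideanSpace ℂ (Fin n → Bool) |
          ∃ w : Fin n → Bool,
            (Finset.univ.filter fun i => w i = true).card = d ∧
            v = EuclideanSpace.single w 1})ᗮ →
      (1 : ℝ) / (n.choose d : ℝ)
        ≤ (inner ℂ φ ((Matrix.toEuclideanLin (Hstab n d)) φ) : ℂ).re := by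
  have hweight_le (w : Fin n → Bool) : hammingWeight w ≤ n := by
    simpa using hammingWeight_le w
  have hground : {v : EuclideanSpace ℂ (Fin n → Bool) | ∃ w : Fin n → Bool,
        (Finset.univ.filter fun i => w i = true).card = d ∧ v = EuclideanSpace.single w 1}
      = {v | ∃ w, (stabEnergy n d (hammingWeight w) : ℂ) = 0 ∧ v = EuclideanSpace.single w 1} := by
    simp only [Complex.ofReal_eq_zero, stabEnergy_eq_zero_iff hdn (hweight_le _)]
    rfl
  rw [hground, Hstab_eq_diagonal]
  refine ⟨Matrix.posSemidef_diagonal_iff.2 fun w => ?_, Matrix.ker_toEuclideanLin_diagonal _,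
    fun φ hφ hperp => ?_⟩
  · exact_mod_cast stabEnergy_nonneg hdn (hweight_le w)
  · have hbound := Matrix.mul_norm_sq_le_re_inner_toEuclideanLin_diagonal (c := 1 / n.choose d)
      (φ := φ) fun w hw => one_div_choose_le_stabEnergy hdn (hweight_le w) fun hwd =>
        hw (EuclideanSpace.apply_eq_zero_of_mem_orthogonal_span_single_one hperp
          (by simp [hwd, stabEnergy_self]))
    simpa [hφ] using hbound

/-- `H_stab` is positive semidefinite, its kernel is exactly the span of the
computational basis states of Hamming weight `d`, and every unit vector
orthogonal to that span has energy at least `1/C(n,d)`. -/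
theorem Hstab_spectrum (n d : ℕ) (hd : 1 ≤ d) (hdn : d ≤ n) :
    (Hstab n d).PosSemidef ∧
    LinearMap.ker (Matrix.toEuclideanLin (Hstab n d))
      = Submodule.span ℂ {v : EuclideanSpace ℂ (Fin n → Bool) |
          ∃ w : Fin n → Bool,
            (Finset.univ.filter fun i => w i = true).card = d ∧
            v = EuclideanSpace.single w 1} ∧
    ∀ φ : EuclideanSpace ℂ (Fin n → Bool), ‖φ‖ = 1 →
      φ ∈ (Submodule.span ℂ {v : EuclideanSpace ℂ (Fin n → Bool) |
          ∃ w : Fin n → Bool,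
            (Finset.univ.filter fun i => w i = true).card = d ∧
            v = EuclideanSpace.single w 1})ᗮ →
      (1 : ℝ) / (n.choose d : ℝ)
        ≤ (inner ℂ φ ((Matrix.toEuclideanLin (Hstab n d)) φ) : ℂ).re :=
  Hstab_spectrum_general n d hdn
end

section
/- (Grover reflection spectrum) Let V be a finite-dimensional complex inner product space, let v ∈ V be a unit vector, and let Π be an orthogonal projection on V with Πv ≠ 0 and v − Πv ≠ 0. Let θ ∈ (0, π) be the angle with sin(θ/2) = ‖v − Πv‖. Then the operator R := (2·v v* − I)(2Π − I) maps the two-dimensional subspace W := span{Πv, v − Πv} to itself, and the restriction of R to W has eigenvalues e^{iθ} and e^{−iθ}. -/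
/-!
On `W` the two reflections act as a rotation. With `a = Πv`, `b = v − Πv`, `c = ‖a‖` and
`s = ‖b‖`, the vectors `a` and `b` are orthogonal, `c² + s² = 1`, and `R` sends
`a ↦ (c² − s²) a + 2c² b` and `b ↦ −2s² a + (c² − s²) b`. The vectors `s a ∓ i c b` are then
eigenvectors with eigenvalues `(c ± i s)²`, and `c = cos (θ/2)`, `s = sin (θ/2)` turn these
into `e^{± iθ}`.
-/

section Projection

theorem apply_apply_of_comp_self {R M : Type*} [Semiring R] [AddCommMonoid M] [Module R M]
    {Pi : M →ₗ[R] M} (hidem : Pi.comp Pi = Pi) (v : M) : Pi (Pi v) = Pi v :=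
  LinearMap.congr_fun hidem v

variable {R M : Type*} [Ring R] [AddCommGroup M] [Module R M] {Pi : M →ₗ[R] M}
  (hidem : Pi.comp Pi = Pi)
include hidem

theorem map_sub_map_self_eq_zero (v : M) : Pi (v - Pi v) = 0 := by
  rw [map_sub, apply_apply_of_comp_self hidem, sub_self]

theorem two_nsmul_sub_id_apply_map_self (v : M) :
    (2 • Pi - LinearMap.id : M →ₗ[R] M) (Pi v) = Pi v := by
  rw [LinearMap.sub_apply, LinearMap.smul_apply, apply_apply_of_comp_self hidem, two_nsmul,
    LinearMap.id_apply, add_sub_cancel_right]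

theorem two_nsmul_sub_id_apply_sub_map_self (v : M) :
    (2 • Pi - LinearMap.id : M →ₗ[R] M) (v - Pi v) = -(v - Pi v) := by
  rw [LinearMap.sub_apply, LinearMap.smul_apply, map_sub_map_self_eq_zero hidem, smul_zero,
    LinearMap.id_apply, zero_sub]

end Projection

section OrthogonalProjection

variable {𝕜 V : Type*} [RCLike 𝕜] [NormedAddCommGroup V] [InnerProductSpace 𝕜 V]
  {Pi : V →ₗ[𝕜] V} (hidem : Pi.comp Pi = Pi)
  (hsym : ∀ x y : V, (inner 𝕜 (Pi x) y : 𝕜) = inner 𝕜 x (Pi y))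
include hidem hsym

theorem inner_map_sub_map_self_eq_zero (v : V) : (inner 𝕜 (Pi v) (v - Pi v) : 𝕜) = 0 := by
  rw [hsym, map_sub_map_self_eq_zero hidem, inner_zero_right]

theorem inner_map_self_eq_norm_sq (v : V) : (inner 𝕜 v (Pi v) : 𝕜) = (‖Pi v‖ : 𝕜) ^ 2 := by
  rw [← inner_self_eq_norm_sq_to_K, hsym, apply_apply_of_comp_self hidem]

theorem inner_sub_map_self_eq_norm_sq (v : V) :
    (inner 𝕜 v (v - Pi v) : 𝕜) = (‖v - Pi v‖ : 𝕜) ^ 2 := by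
  rw [← inner_self_eq_norm_sq_to_K, inner_sub_left, inner_map_sub_map_self_eq_zero hidem hsym,
    sub_zero]

theorem norm_map_sq_add_norm_sub_map_sq (v : V) : ‖Pi v‖ ^ 2 + ‖v - Pi v‖ ^ 2 = ‖v‖ ^ 2 := by
  have := norm_add_sq_eq_norm_sq_add_norm_sq_of_inner_eq_zero _ _
    (inner_map_sub_map_self_eq_zero hidem hsym v)
  rw [add_sub_cancel] at this
  simp only [sq, this]

end OrthogonalProjection

theorem two_nsmul_sub_id_apply_of_forall_eq_inner_smul {𝕜 V : Type*} [RCLike 𝕜]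
    [NormedAddCommGroup V] [InnerProductSpace 𝕜 V] {v : V} {Pv : V →ₗ[𝕜] V}
    (hPvdef : ∀ w : V, Pv w = (inner 𝕜 v w : 𝕜) • v) (x : V) :
    (2 • Pv - LinearMap.id : V →ₗ[𝕜] V) x = (2 * (inner 𝕜 v x : 𝕜)) • v - x := by
  rw [LinearMap.sub_apply, LinearMap.smul_apply, hPvdef, LinearMap.id_apply, two_nsmul,
    ← two_smul 𝕜, smul_smul]

section Grover

variable {𝕜 V : Type*} [RCLike 𝕜] [NormedAddCommGroup V] [InnerProductSpace 𝕜 V]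
  {v : V} {Pi Pv : V →ₗ[𝕜] V} (hv : ‖v‖ = 1) (hidem : Pi.comp Pi = Pi)
  (hsym : ∀ x y : V, (inner 𝕜 (Pi x) y : 𝕜) = inner 𝕜 x (Pi y))
include hv hidem hsym

theorem norm_map_sq_add_norm_sub_map_sq_of_norm_eq_one :
    (‖Pi v‖ : 𝕜) ^ 2 + (‖v - Pi v‖ : 𝕜) ^ 2 = 1 := by
  exact_mod_cast (norm_map_sq_add_norm_sub_map_sq hidem hsym v).trans (by rw [hv, one_pow])

variable (hPvdef : ∀ w : V, Pv w = (inner 𝕜 v w : 𝕜) • v)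
include hPvdef

theorem grover_apply_map_self :
    ((2 • Pv - LinearMap.id).comp (2 • Pi - LinearMap.id)) (Pi v) =
      ((‖Pi v‖ : 𝕜) ^ 2 - (‖v - Pi v‖ : 𝕜) ^ 2) • Pi v +
        (2 * (‖Pi v‖ : 𝕜) ^ 2) • (v - Pi v) := by
  rw [LinearMap.comp_apply, two_nsmul_sub_id_apply_map_self hidem,
    two_nsmul_sub_id_apply_of_forall_eq_inner_smul hPvdef, inner_map_self_eq_norm_sq hidem hsym]
  linear_combination (norm := module)
    norm_map_sq_add_norm_sub_map_sq_of_norm_eq_one hv hidem hsym • Pi v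

theorem grover_apply_sub_map_self :
    ((2 • Pv - LinearMap.id).comp (2 • Pi - LinearMap.id)) (v - Pi v) =
      (-(2 * (‖v - Pi v‖ : 𝕜) ^ 2)) • Pi v +
        ((‖Pi v‖ : 𝕜) ^ 2 - (‖v - Pi v‖ : 𝕜) ^ 2) • (v - Pi v) := by
  rw [LinearMap.comp_apply, two_nsmul_sub_id_apply_sub_map_self hidem,
    two_nsmul_sub_id_apply_of_forall_eq_inner_smul hPvdef, inner_neg_right,
    inner_sub_map_self_eq_norm_sq hidem hsym]
  linear_combination (norm := module)
    norm_map_sq_add_norm_sub_map_sq_of_norm_eq_one hv hidem hsym • (Pi v - v)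

end Grover

theorem apply_smul_sub_smul_eq_sq_smul {K M : Type*} [CommRing K] [AddCommGroup M] [Module K M]
    (R : M →ₗ[K] M) {a b : M} {c s ε : K} (hε : ε ^ 2 = -1)
    (ha : R a = (c ^ 2 - s ^ 2) • a + (2 * c ^ 2) • b)
    (hb : R b = (-(2 * s ^ 2)) • a + (c ^ 2 - s ^ 2) • b) :
    R (s • a - (c * ε) • b) = (c + s * ε) ^ 2 • (s • a - (c * ε) • b) := by
  rw [map_sub, map_smul, map_smul, ha, hb]
  match_scalars
  · linear_combination (-s ^ 3) * hε
  · linear_combination (2 * s * c ^ 2 + c * s ^ 2 * ε) * hε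

theorem smul_sub_smul_ne_zero_of_inner_eq_zero {𝕜 V : Type*} [RCLike 𝕜] [NormedAddCommGroup V]
    [InnerProductSpace 𝕜 V] {a b : V} (hab : (inner 𝕜 a b : 𝕜) = 0) (ha : a ≠ 0) {s : 𝕜}
    (hs : s ≠ 0) (t : 𝕜) : s • a - t • b ≠ 0 := by
  intro h
  have h' := congrArg (inner 𝕜 a) h
  rw [inner_sub_right, inner_smul_right, inner_smul_right, hab, inner_zero_right, mul_zero,
    sub_zero] at h'
  exact mul_ne_zero hs (inner_self_ne_zero.mpr ha) h'

theorem eq_cos_of_sq_add_sin_sq_eq_one {c x : ℝ} (hc : 0 ≤ c)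
    (hx : x ∈ Set.Icc (-(Real.pi / 2)) (Real.pi / 2)) (h : c ^ 2 + Real.sin x ^ 2 = 1) :
    c = Real.cos x :=
  (sq_eq_sq₀ hc (Real.cos_nonneg_of_mem_Icc hx)).mp (by linarith [Real.sin_sq_add_cos_sq x])

theorem cexp_mul_I_eq_sq_half (x : ℝ) :
    Complex.exp (x * Complex.I) = (Real.cos (x / 2) + Real.sin (x / 2) * Complex.I) ^ 2 := by
  rw [show (x : ℂ) * Complex.I = (x / 2 : ℝ) * Complex.I + (x / 2 : ℝ) * Complex.I by
      push_cast; ring, Complex.exp_add, Complex.exp_mul_I, Complex.ofReal_cos,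
    Complex.ofReal_sin, sq]

theorem cexp_neg_mul_I_eq_sq_half (x : ℝ) :
    Complex.exp (-x * Complex.I) = (Real.cos (x / 2) + Real.sin (x / 2) * -Complex.I) ^ 2 := by
  rw [← Complex.ofReal_neg, cexp_mul_I_eq_sq_half, neg_div, Real.cos_neg, Real.sin_neg]
  push_cast
  ring

theorem grover_reflection_spectrum_general {V : Type*} [NormedAddCommGroup V]
    [InnerProductSpace ℂ V]
    (v : V) (hv : ‖v‖ = 1)
    (Pi : V →ₗ[ℂ] V) (hidem : Pi.comp Pi = Pi)
    (hsym : ∀ x y : V, (inner ℂ (Pi x) y : ℂ) = inner ℂ x (Pi y))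
    (hPv : Pi v ≠ 0) (hQv : v - Pi v ≠ 0)
    (θ : ℝ) (hθ0 : 0 < θ) (hθπ : θ < Real.pi)
    (hθ : Real.sin (θ / 2) = ‖v - Pi v‖)
    (Pv : V →ₗ[ℂ] V) (hPvdef : ∀ w : V, Pv w = (inner ℂ v w : ℂ) • v) :
    (∀ w ∈ Submodule.span ℂ {Pi v, v - Pi v},
        ((2 • Pv - LinearMap.id).comp (2 • Pi - LinearMap.id)) w
          ∈ Submodule.span ℂ {Pi v, v - Pi v}) ∧
    (∃ w₁ ∈ Submodule.span ℂ {Pi v, v - Pi v}, w₁ ≠ 0 ∧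
        ((2 • Pv - LinearMap.id).comp (2 • Pi - LinearMap.id)) w₁
          = Complex.exp (θ * Complex.I) • w₁) ∧
    (∃ w₂ ∈ Submodule.span ℂ {Pi v, v - Pi v}, w₂ ≠ 0 ∧
        ((2 • Pv - LinearMap.id).comp (2 • Pi - LinearMap.id)) w₂
          = Complex.exp (-θ * Complex.I) • w₂) := by
  set R := (2 • Pv - LinearMap.id).comp (2 • Pi - LinearMap.id)
  set W := Submodule.span ℂ {Pi v, v - Pi v}
  have hc : ‖Pi v‖ = Real.cos (θ / 2) :=
    eq_cos_of_sq_add_sin_sq_eq_one (norm_nonneg _) ⟨by linarith, by linarith⟩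
      (by rw [hθ, norm_map_sq_add_norm_sub_map_sq hidem hsym, hv, one_pow])
  have hRa := grover_apply_map_self hv hidem hsym hPvdef
  have hRb := grover_apply_sub_map_self hv hidem hsym hPvdef
  rw [hc, ← hθ] at hRa hRb
  have hW : W ≤ W.comap R := Submodule.span_le.mpr <| Set.pair_subset
    (Submodule.mem_span_pair.mpr ⟨_, _, hRa.symm⟩) (Submodule.mem_span_pair.mpr ⟨_, _, hRb.symm⟩)
  have eigenvector (ε : ℂ) (hε : ε ^ 2 = -1) : ∃ w ∈ W, w ≠ 0 ∧
      R w = (Real.cos (θ / 2) + Real.sin (θ / 2) * ε) ^ 2 • w :=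
    ⟨_, Submodule.mem_span_pair.mpr ⟨Real.sin (θ / 2), -(Real.cos (θ / 2) * ε), by
      rw [neg_smul, ← sub_eq_add_neg]⟩,
      smul_sub_smul_ne_zero_of_inner_eq_zero (inner_map_sub_map_self_eq_zero hidem hsym v) hPv
        (by rw [hθ]; exact_mod_cast norm_ne_zero_iff.mpr hQv) _,
      apply_smul_sub_smul_eq_sq_smul R hε hRa hRb⟩
  refine ⟨fun w hw => hW hw, ?_, ?_⟩
  · rw [cexp_mul_I_eq_sq_half]
    exact eigenvector _ Complex.I_sq
  · rw [cexp_neg_mul_I_eq_sq_half]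
    exact eigenvector _ (by rw [neg_sq, Complex.I_sq])

/-- **Grover reflection spectrum.** Let `v` be a unit vector in a
finite-dimensional complex inner product space, `Π` an orthogonal projection
(idempotent and symmetric) with `Πv ≠ 0` and `v − Πv ≠ 0`, and `θ ∈ (0,π)` with
`sin(θ/2) = ‖v − Πv‖`.  Then `R = (2vv* − I)(2Π − I)` maps
`W = span{Πv, v − Πv}` to itself, and the restriction of `R` to `W` has
eigenvalues `e^{iθ}` and `e^{−iθ}` (witnessed by nonzero eigenvectors in `W`). -/
theorem grover_reflection_spectrum {V : Type*} [NormedAddCommGroup V]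
    [InnerProductSpace ℂ V] [FiniteDimensional ℂ V]
    (v : V) (hv : ‖v‖ = 1)
    (Pi : V →ₗ[ℂ] V) (hidem : Pi.comp Pi = Pi)
    (hsym : ∀ x y : V, (inner ℂ (Pi x) y : ℂ) = inner ℂ x (Pi y))
    (hPv : Pi v ≠ 0) (hQv : v - Pi v ≠ 0)
    (θ : ℝ) (hθ0 : 0 < θ) (hθπ : θ < Real.pi)
    (hθ : Real.sin (θ / 2) = ‖v - Pi v‖)
    (Pv : V →ₗ[ℂ] V) (hPvdef : ∀ w : V, Pv w = (inner ℂ v w : ℂ) • v) :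
    (∀ w ∈ Submodule.span ℂ {Pi v, v - Pi v},
        ((2 • Pv - LinearMap.id).comp (2 • Pi - LinearMap.id)) w
          ∈ Submodule.span ℂ {Pi v, v - Pi v}) ∧
    (∃ w₁ ∈ Submodule.span ℂ {Pi v, v - Pi v}, w₁ ≠ 0 ∧
        ((2 • Pv - LinearMap.id).comp (2 • Pi - LinearMap.id)) w₁
          = Complex.exp (θ * Complex.I) • w₁) ∧
    (∃ w₂ ∈ Submodule.span ℂ {Pi v, v - Pi v}, w₂ ≠ 0 ∧
        ((2 • Pv - LinearMap.id).comp (2 • Pi - LinearMap.id)) w₂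
          = Complex.exp (-θ * Complex.I) • w₂) :=
  grover_reflection_spectrum_general v hv Pi hidem hsym hPv hQv θ hθ0 hθπ hθ Pv hPvdef
end

section
/- For every real number x with 0 ≤ x ≤ 1/8, it holds that (1 + x)·(1 + e^{x} + e^{2x}) ≤ 3 + 7x. -/
/-! Bound `e^x` and `e^{2x}` by their cubic Taylor polynomials plus the
remainder `(2/9) t³` (valid for `0 ≤ t ≤ 1`); the claim then reduces to the polynomial inequality
`(1 + x)(3 + 3x + (5/2)x² + 2x³) ≤ 3 + 7x`, which holds on `[0, 1/8]`. -/

open Real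

lemma Real.exp_le_cubic_taylor {t : ℝ} (h0 : 0 ≤ t) (h1 : t ≤ 1) :
    exp t ≤ 1 + t + t ^ 2 / 2 + 2 / 9 * t ^ 3 := by
  have h := Real.exp_bound' h0 h1 (n := 3) (by norm_num)
  norm_num [Finset.sum_range_succ, Nat.factorial] at h
  linarith

lemma one_add_mul_cubic_le {x : ℝ} (h0 : 0 ≤ x) (h1 : x ≤ 1 / 8) :
    (1 + x) * (3 + 3 * x + 5 / 2 * x ^ 2 + 2 * x ^ 3) ≤ 3 + 7 * x := by
  nlinarith [mul_nonneg h0 (sub_nonneg.mpr h1), pow_nonneg h0 2, pow_nonneg h0 3]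

/-- For every real `x` with `0 ≤ x ≤ 1/8`, `(1 + x)·(1 + e^x + e^{2x}) ≤ 3 + 7x`. -/
theorem partition_error_calibration (x : ℝ) (h0 : 0 ≤ x) (h1 : x ≤ 1/8) :
    (1 + x) * (1 + Real.exp x + Real.exp (2 * x)) ≤ 3 + 7 * x := by
  have hx := Real.exp_le_cubic_taylor h0 (by linarith)
  have h2x := Real.exp_le_cubic_taylor (t := 2 * x) (by linarith) (by linarith)
  calc (1 + x) * (1 + exp x + exp (2 * x))
      ≤ (1 + x) * (3 + 3 * x + 5 / 2 * x ^ 2 + 2 * x ^ 3) := by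
        gcongr ?_ * ?_
        linarith
    _ ≤ 3 + 7 * x := one_add_mul_cubic_le h0 h1
end
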